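/- Let L, M ∈ 𝐋^reg and P ∈ 𝐎*(L,M). Then for every u ∈ [0,1] the matrix L(u) := (1−u)L + uMP belongs to 𝐋^reg, i.e., (L(u)ᵀL(u))_{t,t} is positive definite for every t = 1,…,T. (Hence 𝐋^reg/𝐎 is a geodesically convex subset of 𝐋/𝐎 with respect to d_ABW.) -/

import Mathlib

open Matrix Filter Topology

/-- Square matrices of size `dT × dT`, indexed by blocks: index `(t, i)` is
row/column `i` within block `t`. -/
abbrev Mat (d T : ℕ) := Matrix (Fin T × Fin d) (Fin T × Fin d) ℝ

/-- The `t`-th diagonal `d × d` block of a `dT × dT` matrix. -/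
def blk {d T : ℕ} (A : Mat d T) (t : Fin T) : Matrix (Fin d) (Fin d) ℝ :=
  fun i j => A (t, i) (t, j)

/-- The `t`-th block column of a `dT × dT` matrix, a `dT × d` matrix. -/
def colBlk {d T : ℕ} (A : Mat d T) (t : Fin T) : Matrix (Fin T × Fin d) (Fin d) ℝ :=
  fun p j => A p (t, j)

/-- Membership in `𝐋`: block lower triangular matrices. -/
def memL {d T : ℕ} (A : Mat d T) : Prop :=
  ∀ (t s : Fin T) (i j : Fin d), t < s → A (t, i) (s, j) = 0

/-- Membership in `𝐎`: block diagonal matrices with orthogonal `d × d` diagonal blocks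
(equivalently: block diagonal and orthogonal). -/
def memO {d T : ℕ} (O : Mat d T) : Prop :=
  (∀ (t s : Fin T) (i j : Fin d), t ≠ s → O (t, i) (s, j) = 0) ∧ Oᵀ * O = 1

/-- The Frobenius norm of a real matrix. -/
noncomputable def frobNorm {m n : Type*} [Fintype m] [Fintype n] (A : Matrix m n ℝ) : ℝ :=
  Real.sqrt (∑ i, ∑ j, (A i j) ^ 2)

/-- The Frobenius inner product of two real matrices. -/
noncomputable def frobInner {m n : Type*} [Fintype m] [Fintype n] (A B : Matrix m n ℝ) : ℝ :=
  ∑ i, ∑ j, A i j * B i j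

/-- The adapted Bures–Wasserstein distance `d_ABW(L, M) = inf_{O ∈ 𝐎} ‖L - M O‖_F`. -/
noncomputable def dABW {d T : ℕ} (L M : Mat d T) : ℝ :=
  sInf {r : ℝ | ∃ O : Mat d T, memO O ∧ r = frobNorm (L - M * O)}

/-- The set `𝐎*(L, M)` of optimizers of `inf_{O ∈ 𝐎} ‖L - M O‖_F`. -/
noncomputable def OStar {d T : ℕ} (L M : Mat d T) : Set (Mat d T) :=
  {O | memO O ∧ frobNorm (L - M * O) = dABW L M}

/-- The set `𝐕(L) = {M P - L : M ∈ 𝐋, P ∈ 𝐎*(L, M)}`. -/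
noncomputable def VSet {d T : ℕ} (L : Mat d T) : Set (Mat d T) :=
  {V | ∃ M P : Mat d T, memL M ∧ P ∈ OStar L M ∧ V = M * P - L}

/-- The set `𝒱(L) = {V ∈ 𝐋 : (Vᵀ L)_{t,t} is symmetric for all t}`. -/
def calV {d T : ℕ} (L : Mat d T) : Set (Mat d T) :=
  {V | memL V ∧ ∀ t : Fin T, (blk (Vᵀ * L) t).IsSymm}

/-- The set `𝐋^reg = {L ∈ 𝐋 : (Lᵀ L)_{t,t} is positive definite for all t}`. -/
def LReg {d T : ℕ} : Set (Mat d T) :=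
  {L | memL L ∧ ∀ t : Fin T, (blk (Lᵀ * L) t).PosDef}

/-- The sum of the singular values of a real square matrix `A`,
i.e. the trace of the positive semidefinite square root of `Aᵀ A`. -/
noncomputable def svSum {n : ℕ} (A : Matrix (Fin n) (Fin n) ℝ) : ℝ :=
  ((Matrix.posSemidef_conjTranspose_mul_self A).1.eigenvectorUnitary.1 *
    Matrix.diagonal ((RCLike.ofReal : ℝ → ℝ) ∘ (Real.sqrt ·) ∘ (Matrix.posSemidef_conjTranspose_mul_self A).1.eigenvalues) *
    (star (Matrix.posSemidef_conjTranspose_mul_self A).1.eigenvectorUnitary : Matrix (Fin n) (Fin n) ℝ)).trace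

/-- The operator norm of a real matrix: the supremum of the euclidean norm `‖A x‖₂`
over the euclidean unit ball. -/
noncomputable def opNorm {m n : Type*} [Fintype m] [Fintype n] (A : Matrix m n ℝ) : ℝ :=
  sSup {r : ℝ | ∃ x : n → ℝ, (∑ j, (x j) ^ 2) ≤ 1 ∧ r = Real.sqrt (∑ i, (A.mulVec x i) ^ 2)}


/-!
Optimality of `P` is only used against perturbations inside one block. If `w ≠ 0` is supported
in block `t` and `H = 1 - 2 w wᵀ / ‖w‖²` is the Householder reflection, then `P H ∈ 𝐎` and
`tr(Lᵀ M P H) = tr(Lᵀ M P) - 2 wᵀ (Lᵀ M P) w / ‖w‖²`; as `P` maximizes `O ↦ tr(Lᵀ M O)` over `𝐎`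
(because `‖L - M O‖_F² = ‖L‖_F² - 2 tr(Lᵀ M O) + ‖M‖_F²`), every diagonal block of `Lᵀ M P` is
positive semidefinite. Hence for such `w` the vectors `a = L w` and `b = M P w` are nonzero
(`P w` is again a nonzero vector supported in block `t`) with `a ⬝ b ≥ 0`, so
`L(u) w = (1 - u) a + u b ≠ 0`, which is positive definiteness of `(L(u)ᵀ L(u))_{t,t}`.
-/

namespace Matrix

variable {m n : Type*} [Fintype m] [Fintype n]

lemma frobNorm_sq (A : Matrix m n ℝ) : frobNorm A ^ 2 = trace (Aᵀ * A) := by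
  rw [frobNorm, Real.sq_sqrt (by positivity), Finset.sum_comm]
  simp [trace, mul_apply, sq]

lemma frobNorm_sub_mul_sq [DecidableEq n] (L M : Matrix m n ℝ) {O : Matrix n n ℝ}
    (hO : Oᵀ * O = 1) :
    frobNorm (L - M * O) ^ 2 = frobNorm L ^ 2 - 2 * trace (Lᵀ * (M * O)) + frobNorm M ^ 2 := by
  have hcross : trace ((M * O)ᵀ * L) = trace (Lᵀ * (M * O)) := by
    rw [← trace_transpose, transpose_mul, transpose_transpose]
  have hsq : trace ((M * O)ᵀ * (M * O)) = trace (Mᵀ * M) := by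
    rw [transpose_mul, Matrix.mul_assoc, trace_mul_comm, ← Matrix.mul_assoc,
      Matrix.mul_assoc (Mᵀ * M), mul_eq_one_comm.mp hO, Matrix.mul_one]
  rw [frobNorm_sq, frobNorm_sq, frobNorm_sq, transpose_sub, Matrix.sub_mul, Matrix.mul_sub,
    Matrix.mul_sub, trace_sub, trace_sub, trace_sub, hcross, hsq]
  ring

lemma dotProduct_self_pos {v : n → ℝ} : 0 < v ⬝ᵥ v ↔ v ≠ 0 := by
  simpa using dotProduct_star_self_pos_iff (v := v)

lemma sub_smul_add_smul_ne_zero {a b : n → ℝ} (ha : a ≠ 0) (hb : b ≠ 0) (hab : 0 ≤ a ⬝ᵥ b)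
    {u : ℝ} (hu : u ∈ Set.Icc (0 : ℝ) 1) : (1 - u) • a + u • b ≠ 0 := by
  have haa := dotProduct_self_pos.2 ha
  have hbb := dotProduct_self_pos.2 hb
  rw [Ne, ← dotProduct_self_eq_zero]
  simp only [add_dotProduct, dotProduct_add, smul_dotProduct, dotProduct_smul, smul_eq_mul,
    dotProduct_comm b a]
  obtain ⟨hu0, hu1⟩ := hu
  have hends : 0 < (1 - u) ^ 2 * (a ⬝ᵥ a) + u ^ 2 * (b ⬝ᵥ b) := by
    rcases hu0.eq_or_lt with rfl | hu
    · simpa using haa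
    · exact add_pos_of_nonneg_of_pos (mul_nonneg (sq_nonneg _) haa.le) (mul_pos (pow_pos hu 2) hbb)
  nlinarith [mul_nonneg (mul_nonneg hu0 (sub_nonneg.2 hu1)) hab]

variable [DecidableEq n]

/-- Since `2 / 0 = 0`, `householder 0 = 1`. -/
noncomputable def householder (w : n → ℝ) : Matrix n n ℝ :=
  1 - (2 / (w ⬝ᵥ w)) • vecMulVec w w

lemma householder_transpose_mul_self (w : n → ℝ) : (householder w)ᵀ * householder w = 1 := by
  by_cases hw : w = 0
  · simp [householder, hw]
  have hww : w ⬝ᵥ w ≠ 0 := dotProduct_self_eq_zero.not.mpr hw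
  have hc : 2 / (w ⬝ᵥ w) * (2 / (w ⬝ᵥ w) * (w ⬝ᵥ w)) = 2 * (2 / (w ⬝ᵥ w)) := by
    field_simp
  simp only [householder, transpose_sub, transpose_one, transpose_smul, transpose_vecMulVec,
    sub_mul, mul_sub, Matrix.one_mul, Matrix.mul_one, Matrix.smul_mul, Matrix.mul_smul,
    vecMulVec_mul_vecMulVec, vecMulVec_smul, smul_smul, hc]
  module

lemma trace_mul_householder (S : Matrix n n ℝ) (w : n → ℝ) :
    trace (S * householder w) = trace S - 2 / (w ⬝ᵥ w) * (w ⬝ᵥ S *ᵥ w) := by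
  rw [householder, mul_sub, Matrix.mul_one, Matrix.mul_smul, trace_sub, trace_smul, mul_vecMulVec,
    trace_vecMulVec, dotProduct_comm (S *ᵥ w), smul_eq_mul]

end Matrix

section Blocks

variable {d T : ℕ}

def blockVec (t : Fin T) (x : Fin d → ℝ) : Fin T × Fin d → ℝ :=
  fun p => if p.1 = t then x p.2 else 0

lemma blockVec_eq_zero_iff {t : Fin T} {x : Fin d → ℝ} : blockVec t x = 0 ↔ x = 0 := by
  refine ⟨fun h => funext fun i => by simpa [blockVec] using congrFun h (t, i), ?_⟩
  rintro rfl
  ext p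
  simp [blockVec]

lemma blockVec_dotProduct_mulVec (S : Mat d T) (t : Fin T) (x : Fin d → ℝ) :
    blockVec t x ⬝ᵥ S *ᵥ blockVec t x = x ⬝ᵥ blk S t *ᵥ x := by
  simp only [blockVec, dotProduct, mulVec, blk, Fintype.sum_prod_type, ite_mul, mul_ite,
    zero_mul, mul_zero, Finset.sum_ite_eq', Finset.mem_univ, if_true, Finset.sum_ite_irrel,
    Finset.sum_const_zero]

lemma dotProduct_blk_transpose_mul_mulVec (A B : Mat d T) (t : Fin T) (x : Fin d → ℝ) :
    x ⬝ᵥ blk (Aᵀ * B) t *ᵥ x = (A *ᵥ blockVec t x) ⬝ᵥ (B *ᵥ blockVec t x) := by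
  rw [← blockVec_dotProduct_mulVec, ← mulVec_mulVec, dotProduct_mulVec, vecMul_transpose]

lemma posDef_blk_transpose_mul_self_iff (A : Mat d T) (t : Fin T) :
    (blk (Aᵀ * A) t).PosDef ↔ ∀ x, x ≠ 0 → A *ᵥ blockVec t x ≠ 0 := by
  have hA : (blk (Aᵀ * A) t).IsHermitian :=
    (isHermitian_conjTranspose_mul_self A).submatrix fun i => (t, i)
  simp only [posDef_iff_dotProduct_mulVec, hA, true_and, star_trivial,
    dotProduct_blk_transpose_mul_mulVec, dotProduct_self_pos]

lemma memO.mul {A B : Mat d T} (hA : memO A) (hB : memO B) : memO (A * B) := by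
  constructor
  · intro t s i j hts
    rw [mul_apply]
    refine Finset.sum_eq_zero fun q _ => ?_
    by_cases hq : q.1 = t
    · rw [hB.1 q.1 s q.2 j (hq ▸ hts), mul_zero]
    · rw [hA.1 t q.1 i q.2 (fun h => hq h.symm), zero_mul]
  · rw [transpose_mul, Matrix.mul_assoc, ← Matrix.mul_assoc Aᵀ, hA.2, Matrix.one_mul, hB.2]

lemma memO_householder_blockVec (t : Fin T) (x : Fin d → ℝ) :
    memO (householder (blockVec t x)) := by
  refine ⟨fun r s i j hrs => ?_, householder_transpose_mul_self _⟩
  have hw : blockVec t x (r, i) * blockVec t x (s, j) = 0 := by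
    rcases eq_or_ne r t with rfl | hr
    · simp [blockVec, hrs.symm]
    · simp [blockVec, hr]
  simp [householder, one_apply, hrs, vecMulVec_apply, hw]

lemma memO.mulVec_blockVec {P : Mat d T} (hP : memO P) (t : Fin T) (x : Fin d → ℝ) :
    P *ᵥ blockVec t x = blockVec t (blk P t *ᵥ x) := by
  ext ⟨s, i⟩
  simp only [mulVec, dotProduct, blockVec, blk, Fintype.sum_prod_type, mul_ite, mul_zero,
    Finset.sum_ite_irrel, Finset.sum_const_zero, Finset.sum_ite_eq', Finset.mem_univ, if_true]
  split_ifs with hs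
  · rw [hs]
  · exact Finset.sum_eq_zero fun j _ => by rw [hP.1 s t i j hs, zero_mul]

lemma posDef_blk_mul_memO {M P : Mat d T} {t : Fin T} (hM : (blk (Mᵀ * M) t).PosDef)
    (hP : memO P) : (blk ((M * P)ᵀ * (M * P)) t).PosDef := by
  rw [posDef_blk_transpose_mul_self_iff] at hM ⊢
  intro x hx hMPx
  have hPx : P *ᵥ blockVec t x ≠ 0 := fun h => by
    simpa [mulVec_mulVec, hP.2, blockVec_eq_zero_iff, hx] using congrArg (Pᵀ *ᵥ ·) h
  rw [hP.mulVec_blockVec, Ne, blockVec_eq_zero_iff] at hPx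
  rw [← mulVec_mulVec, hP.mulVec_blockVec] at hMPx
  exact hM _ hPx hMPx

end Blocks

section Optimality

variable {d T : ℕ} {L M P : Mat d T}

lemma trace_le_of_mem_OStar (hP : P ∈ OStar L M) {O : Mat d T} (hO : memO O) :
    trace (Lᵀ * (M * O)) ≤ trace (Lᵀ * (M * P)) := by
  have hbdd : BddBelow {r : ℝ | ∃ O : Mat d T, memO O ∧ r = frobNorm (L - M * O)} :=
    ⟨0, by rintro r ⟨O, -, rfl⟩; exact Real.sqrt_nonneg _⟩
  have hle : frobNorm (L - M * P) ≤ frobNorm (L - M * O) :=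
    hP.2 ▸ csInf_le hbdd ⟨O, hO, rfl⟩
  have hsq : frobNorm (L - M * P) ^ 2 ≤ frobNorm (L - M * O) ^ 2 :=
    pow_le_pow_left₀ (Real.sqrt_nonneg _) hle 2
  rw [frobNorm_sub_mul_sq _ _ hP.1.2, frobNorm_sub_mul_sq _ _ hO.2] at hsq
  linarith

lemma dotProduct_blk_mulVec_nonneg_of_mem_OStar (hP : P ∈ OStar L M) (t : Fin T)
    (x : Fin d → ℝ) : 0 ≤ x ⬝ᵥ blk (Lᵀ * (M * P)) t *ᵥ x := by
  by_cases hx : x = 0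
  · simp [hx]
  have hw : 0 < blockVec t x ⬝ᵥ blockVec t x :=
    dotProduct_self_pos.2 (blockVec_eq_zero_iff.not.2 hx)
  have h := trace_le_of_mem_OStar hP (hP.1.mul (memO_householder_blockVec t x))
  rw [← Matrix.mul_assoc M, ← Matrix.mul_assoc Lᵀ, trace_mul_householder] at h
  rw [← blockVec_dotProduct_mulVec]
  exact nonneg_of_mul_nonneg_right (by linarith) (div_pos two_pos hw)

end Optimality

theorem stmt18_general (d T : ℕ) (L M P : Mat d T)
    (hL : L ∈ LReg) (hM : M ∈ LReg) (hP : P ∈ OStar L M) :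
    ∀ u : ℝ, u ∈ Set.Icc (0 : ℝ) 1 →
      ∀ t : Fin T,
        (blk (((1 - u) • L + u • (M * P))ᵀ * ((1 - u) • L + u • (M * P))) t).PosDef := by
  intro u hu t
  have hLt := (posDef_blk_transpose_mul_self_iff L t).1 (hL.2 t)
  have hMPt :=
    (posDef_blk_transpose_mul_self_iff (M * P) t).1 (posDef_blk_mul_memO (hM.2 t) hP.1)
  rw [posDef_blk_transpose_mul_self_iff]
  intro x hx
  rw [add_mulVec, smul_mulVec, smul_mulVec]
  refine sub_smul_add_smul_ne_zero (hLt x hx) (hMPt x hx) ?_ hu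
  rw [← dotProduct_blk_transpose_mul_mulVec]
  exact dotProduct_blk_mulVec_nonneg_of_mem_OStar hP t x

/-- for `L, M ∈ 𝐋^reg` and `P ∈ 𝐎*(L,M)`, every point
`(1-u)L + uMP` of the geodesic is again in `𝐋^reg`. -/
theorem stmt18 (d T : ℕ) (hd : 0 < d) (hT : 0 < T) (L M P : Mat d T)
    (hL : L ∈ LReg) (hM : M ∈ LReg) (hP : P ∈ OStar L M) :
    ∀ u : ℝ, u ∈ Set.Icc (0 : ℝ) 1 →
      ∀ t : Fin T,
        (blk (((1 - u) • L + u • (M * P))ᵀ * ((1 - u) • L + u • (M * P))) t).PosDef :=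
  stmt18_general d T L M P hL hM hP
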